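/- arXiv:math/0607789 — 2 statements merged into one kernel-verified Lean document; each statement's English description precedes it below -/
import Mathlib

section
/- Let (M,g) be a compact Riemannian manifold, and let 𝓑 be a separated blocking function, i.e., there exists ε>0 such that for each pair (x,y) in the domain of 𝓑, the ε-balls around the distinct points of the finite blocking set 𝓑(x,y) are pairwise disjoint. Then the cardinalities of the blocking sets 𝓑(x,y) are uniformly bounded above (by vol(M,g)/C, where C>0 is a lower bound for the volume of ε-balls in M determined by an upper sectional curvature bound). In particular, a compact Riemannian manifold with finite blocking admitting a separated blocking function has uniform finite blocking. -/
open Metric Set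

noncomputable section

/-- An abstract model of a smooth compact connected Riemannian manifold of dimension `n`:
a compact connected metric space `M` (with its Riemannian distance), topologically embedded
in `ℝ^N` (e.g. by a Nash embedding), together with its exponential maps `exp p : T_pM ≅ ℝ^n → M`.
Unit speed geodesics are the curves `t ↦ exp p (t • v)` with `‖v‖ = 1`; they are required to be
locally distance realizing, and any two points are joined by a minimizing geodesic. -/
structure CRM (n N : ℕ) where
  M : Type
  [ms : MetricSpace M]
  [cpt : CompactSpace M]
  [conn : ConnectedSpace M]
  [nonempty : Nonempty M]
  /-- a topological embedding of `M` into `ℝ^N`, giving the smooth structure -/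
  emb : M → EuclideanSpace ℝ (Fin N)
  emb_embedding : Topology.IsEmbedding emb
  /-- the exponential map at each point, the tangent space being identified with `ℝ^n` -/
  exp : M → EuclideanSpace ℝ (Fin n) → M
  exp_zero : ∀ p, exp p 0 = p
  exp_cont : Continuous fun q : M × EuclideanSpace ℝ (Fin n) => exp q.1 q.2
  exp_smooth : ∀ p, ContDiff ℝ (⊤ : ℕ∞) fun v => emb (exp p v)
  /-- `t ↦ exp p (t • v)` is a unit speed geodesic: locally distance realizing -/
  exp_geodesic : ∀ p v, ‖v‖ = 1 → ∀ t₀ : ℝ, ∃ ε > 0, ∀ s t : ℝ,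
    |s - t₀| ≤ ε → |t - t₀| ≤ ε → dist (exp p (s • v)) (exp p (t • v)) = |s - t|
  /-- any two points are joined by a minimizing geodesic -/
  exp_min : ∀ p q : M, ∃ v, ‖v‖ = 1 ∧ exp p (dist p q • v) = q

attribute [instance] CRM.ms CRM.cpt CRM.conn CRM.nonempty

namespace CRM

variable {n N : ℕ} (X : CRM n N)

/-- the diameter of `M` -/
def diam : ℝ := Metric.diam (Set.univ : Set X.M)

/-- `X.IsLightRay x y v L`: the unit speed geodesic segment `t ↦ exp x (t • v)`, `t ∈ [0,L]`,
is a light ray from `x` to `y`: it runs from `x` to `y` and its interior avoids `{x, y}`. -/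
structure IsLightRay (x y : X.M) (v : EuclideanSpace ℝ (Fin n)) (L : ℝ) : Prop where
  unit : ‖v‖ = 1
  pos : 0 < L
  endpoint : X.exp x (L • v) = y
  interior : ∀ t ∈ Ioo 0 L, X.exp x (t • v) ≠ x ∧ X.exp x (t • v) ≠ y

/-- `B` blocks all light rays from `x` to `y` in their interior. -/
def Blocks (B : Set X.M) (x y : X.M) : Prop :=
  ∀ v L, X.IsLightRay x y v L → ∃ t ∈ Ioo 0 L, X.exp x (t • v) ∈ B

/-- the blocking number `b(x,y)`: the least cardinality of a finite blocking set, `⊤` if none. -/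
def blockingNumber (x y : X.M) : ℕ∞ :=
  sInf {c : ℕ∞ | ∃ B : Finset X.M, X.Blocks ↑B x y ∧ (B.card : ℕ∞) = c}

/-- the light from `x` to `y` is blocked by finitely many points -/
def FinitelyBlocked (x y : X.M) : Prop := ∃ B : Finset X.M, X.Blocks ↑B x y

/-- the finite blocking property -/
def FiniteBlocking : Prop := ∀ x y : X.M, X.FinitelyBlocked x y

/-- uniform finite blocking: blocking numbers are uniformly bounded -/
def UniformFiniteBlocking : Prop :=
  ∃ k : ℕ, ∀ x y : X.M, ∃ B : Finset X.M, B.card ≤ k ∧ X.Blocks ↑B x y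

/-- cross blocking: `0 < d(x,y) < diam` implies `b(x,y) ≤ 2` -/
def CrossBlocking : Prop :=
  ∀ x y : X.M, 0 < dist x y → dist x y < X.diam → X.blockingNumber x y ≤ 2

/-- sphere blocking: `b(x,x) = 1` for all `x` -/
def SphereBlocking : Prop := ∀ x : X.M, X.blockingNumber x x = 1

/-- `exp p v` is conjugate to `p` along `t ↦ exp p (t • v)`:
the differential of `exp p` at `v` is not of full rank. -/
def ConjugateAlong (p : X.M) (v : EuclideanSpace ℝ (Fin n)) : Prop :=
  ¬ Function.Injective (fderiv ℝ (fun w => X.emb (X.exp p w)) v)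

/-- `q` is conjugate to `p` along some geodesic -/
def Conjugate (p q : X.M) : Prop := ∃ v, X.exp p v = q ∧ X.ConjugateAlong p v

def NoConjugatePoints : Prop := ∀ (p : X.M) v, ¬ X.ConjugateAlong p v

/-- A blocking function: a symmetric choice of a finite blocking set for each finitely
blocked pair of points. -/
structure BlockingFunction where
  B : X.M → X.M → Finset X.M
  symm : ∀ x y, B x y = B y x
  blocks : ∀ x y, X.FinitelyBlocked x y → X.Blocks ↑(B x y) x y

variable {X}

/-- separated: the `ε`-balls about the blockers in each blocking set are disjoint -/
def BlockingFunction.Separated (𝓑 : X.BlockingFunction) : Prop :=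
  ∃ ε > (0:ℝ), ∀ x y : X.M, ∀ b₁ ∈ 𝓑.B x y, ∀ b₂ ∈ 𝓑.B x y, b₁ ≠ b₂ →
    Disjoint (ball b₁ ε) (ball b₂ ε)

/-- the first blocking time along `t ↦ exp p (t • v)`, `t ∈ (0,1)` -/
def BlockingFunction.firstBlockingTime (𝓑 : X.BlockingFunction)
    (p : X.M) (v : EuclideanSpace ℝ (Fin n)) : ℝ :=
  sInf {t : ℝ | t ∈ Ioo (0:ℝ) 1 ∧ X.exp p (t • v) ∈ 𝓑.B p (X.exp p v)}

/-- continuous blocking: the first blocking time is continuous on the set `T'` of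
tangent vectors whose endpoints form a finitely blocked pair -/
def BlockingFunction.Cont (𝓑 : X.BlockingFunction) : Prop :=
  ContinuousOn (fun q : X.M × EuclideanSpace ℝ (Fin n) => 𝓑.firstBlockingTime q.1 q.2)
    {q : X.M × EuclideanSpace ℝ (Fin n) | X.FinitelyBlocked q.1 (X.exp q.1 q.2)}

variable (X)

/-- regular finite blocking: finite blocking via a continuous and separated blocking function -/
def RegularFiniteBlocking : Prop :=
  X.FiniteBlocking ∧ ∃ 𝓑 : X.BlockingFunction, 𝓑.Cont ∧ 𝓑.Separated

/-- regular cross blocking: cross blocking via a continuous and separated blocking function -/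
def RegularCrossBlocking : Prop :=
  X.CrossBlocking ∧ ∃ 𝓑 : X.BlockingFunction, 𝓑.Cont ∧ 𝓑.Separated

/-- the cut time of `p` in the unit direction `v` -/
def cutTime (p : X.M) (v : EuclideanSpace ℝ (Fin n)) : ℝ :=
  sSup {t : ℝ | 0 ≤ t ∧ dist p (X.exp p (t • v)) = t}

/-- the injectivity radius `inj(M,g) = inf_p d(p, Cut(p))` -/
def injRad : ℝ :=
  sInf {r : ℝ | ∃ (p : X.M) (v : EuclideanSpace ℝ (Fin n)), ‖v‖ = 1 ∧ r = X.cutTime p v}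

/-- a Blaschke manifold: the injectivity radius equals the diameter -/
def IsBlaschke : Prop := X.injRad = X.diam

/-- `n_T(x,y)`: the number of geodesic segments from `x` to `y` of length at most `T`,
a segment being recorded by its initial unit vector and its length -/
def nT (x y : X.M) (T : ℝ) : ℕ :=
  Nat.card {q : EuclideanSpace ℝ (Fin n) × ℝ //
    ‖q.1‖ = 1 ∧ 0 < q.2 ∧ q.2 ≤ T ∧ X.exp x (q.2 • q.1) = y}

/-- `m_T(x,y)`: the number of light rays from `x` to `y` of length at most `T` -/
def mT (x y : X.M) (T : ℝ) : ℕ :=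
  Nat.card {q : EuclideanSpace ℝ (Fin n) × ℝ // q.2 ≤ T ∧ X.IsLightRay x y q.1 q.2}

/-- the exponential growth rate of the number of geodesics between `x` and `y`; by Mañé's
theorem this equals the topological entropy `h_top(g)` when `(M,g)` has no conjugate points -/
def geodesicEntropy (x y : X.M) : ℝ :=
  Filter.limsup (fun T : ℝ => Real.log (X.nT x y T) / T) Filter.atTop

/-- flat: every point has a neighborhood isometric to a subset of Euclidean space -/
def Flat : Prop :=
  ∀ p : X.M, ∃ ε > (0:ℝ), ∃ f : X.M → EuclideanSpace ℝ (Fin n),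
    ∀ a ∈ ball p ε, ∀ b ∈ ball p ε, dist (f a) (f b) = dist a b

/-- nonpositive sectional curvature: the local CAT(0) midpoint comparison inequality -/
def NonpositivelyCurved : Prop :=
  ∀ p : X.M, ∃ ε > (0:ℝ), ∀ x ∈ ball p ε, ∀ y ∈ ball p ε, ∀ z ∈ ball p ε, ∀ m ∈ ball p ε,
    dist y m = dist y z / 2 → dist z m = dist y z / 2 →
    dist x m ^ 2 ≤ (dist x y ^ 2 + dist x z ^ 2) / 2 - dist y z ^ 2 / 4

/-- positive sectional curvature: locally, the spherical midpoint comparison inequality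
for some model curvature `κ > 0` -/
def PositivelyCurved : Prop :=
  ∃ κ > (0:ℝ), ∀ p : X.M, ∃ ε > (0:ℝ), ∀ x ∈ ball p ε, ∀ y ∈ ball p ε, ∀ z ∈ ball p ε,
    ∀ m ∈ ball p ε, dist y m = dist y z / 2 → dist z m = dist y z / 2 →
      Real.cos (Real.sqrt κ * dist x y) + Real.cos (Real.sqrt κ * dist x z) ≤
        2 * Real.cos (Real.sqrt κ * dist x m) * Real.cos (Real.sqrt κ * dist y z / 2)

/-- `(M,g)` is isometric to a round sphere: there is a bijection onto the sphere of some
radius `r` in `ℝ^{n+1}` carrying the distance to the great circle distance -/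
def IsRoundSphere : Prop :=
  ∃ r > (0:ℝ), ∃ f : X.M → EuclideanSpace ℝ (Fin (n+1)),
    (∀ a, ‖f a‖ = r) ∧ Function.Injective f ∧
    (∀ u : EuclideanSpace ℝ (Fin (n+1)), ‖u‖ = r → ∃ a, f a = u) ∧
    ∀ a b : X.M, dist a b = r * Real.arccos ((inner ℝ (f a) (f b) : ℝ) / r ^ 2)

/-- the tangent space at `p`, realized inside `ℝ^N` as the image of `d(exp_p)_0` -/
def tangentSpace (p : X.M) : Set (EuclideanSpace ℝ (Fin N)) :=
  Set.range (fderiv ℝ (fun w => X.emb (X.exp p w)) 0)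

/-- orientability: a continuous nonvanishing `n`-form on the tangent spaces -/
def Orientable : Prop :=
  ∃ ω : X.M → (EuclideanSpace ℝ (Fin N) [⋀^Fin n]→L[ℝ] ℝ),
    Continuous ω ∧ ∀ p : X.M, ∃ u : Fin n → EuclideanSpace ℝ (Fin N),
      (∀ i, u i ∈ X.tangentSpace p) ∧ ω p u ≠ 0

/-- a continuous nonvanishing line field: a continuous field of rank one projections
whose lines lie in the tangent spaces -/
def HasLineField : Prop :=
  ∃ P : X.M → (EuclideanSpace ℝ (Fin N) →L[ℝ] EuclideanSpace ℝ (Fin N)),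
    Continuous P ∧ ∀ p : X.M, (∀ x, P p (P p x) = P p x) ∧
      ∃ u, u ≠ 0 ∧ u ∈ X.tangentSpace p ∧ P p u = u ∧ ∀ x, ∃ c : ℝ, P p x = c • u

/-- a geodesic lasso based at `p`: a unit speed geodesic from `p` to `p` of length `L` -/
structure IsLasso (p : X.M) (v : EuclideanSpace ℝ (Fin n)) (L : ℝ) : Prop where
  unit : ‖v‖ = 1
  pos : 0 < L
  closes : X.exp p (L • v) = p

/-- a simple geodesic lasso: injective on `(0,L)` and avoiding `p` there -/
def IsSimpleLasso (p : X.M) (v : EuclideanSpace ℝ (Fin n)) (L : ℝ) : Prop :=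
  X.IsLasso p v L ∧ Set.InjOn (fun t => X.exp p (t • v)) (Ioo 0 L) ∧
    ∀ t ∈ Ioo 0 L, X.exp p (t • v) ≠ p

/-- a closed geodesic of period `L` through `p` with initial direction `v` -/
def IsClosedGeodesic (p : X.M) (v : EuclideanSpace ℝ (Fin n)) (L : ℝ) : Prop :=
  ‖v‖ = 1 ∧ 0 < L ∧ ∀ t : ℝ, X.exp p ((t + L) • v) = X.exp p (t • v)

/-- the lasso `(w, L')` at `p` finitely covers the closed geodesic `(v, L)`,
possibly with reversed orientation -/
def Covers (p : X.M) (w : EuclideanSpace ℝ (Fin n)) (L' : ℝ)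
    (v : EuclideanSpace ℝ (Fin n)) (L : ℝ) : Prop :=
  ∃ k : ℕ, 0 < k ∧ L' = k * L ∧
    ((∀ t : ℝ, X.exp p (t • w) = X.exp p (t • v)) ∨
     (∀ t : ℝ, X.exp p (t • w) = X.exp p (-t • v)))

end CRM
/-- A separated blocking function has uniformly bounded cardinalities of
blocking sets; in particular finite blocking plus a separated blocking function gives
uniform finite blocking. -/
theorem separated_blocking_function_uniform {n N : ℕ} (X : CRM n N)
    (𝓑 : X.BlockingFunction) (hsep : 𝓑.Separated) :
    (∃ K : ℕ, ∀ x y : X.M, (𝓑.B x y).card ≤ K) ∧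
      (X.FiniteBlocking → X.UniformFiniteBlocking) := by
  classical
  obtain ⟨ε, hε, hsep⟩ := hsep
  obtain ⟨t, htfin, htcov⟩ :=
    totallyBounded_iff.1 ((isCompact_univ : IsCompact (Set.univ : Set X.M)).totallyBounded) (ε / 2) (by linarith)
  set g : X.M → X.M := fun b =>
    if h : ∃ c ∈ t, b ∈ ball c (ε / 2) then h.choose else b with hg
  have hgmem : ∀ b : X.M, g b ∈ t ∧ b ∈ ball (g b) (ε / 2) := by
    intro b
    have hb : ∃ c ∈ t, b ∈ ball c (ε / 2) := by
      have := htcov (mem_univ b)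
      simpa using this
    simp only [hg, dif_pos hb]
    exact ⟨hb.choose_spec.1, hb.choose_spec.2⟩
  have key : ∀ x y : X.M, (𝓑.B x y).card ≤ htfin.toFinset.card := by
    intro x y
    apply Finset.card_le_card_of_injOn g
    · intro b _
      simpa using (hgmem b).1
    · intro b₁ hb₁ b₂ hb₂ hgb
      by_contra hne
      have hdisj := hsep x y b₁ (by simpa using hb₁) b₂ (by simpa using hb₂) hne
      have h₁ := (hgmem b₁).2
      have h₂ := (hgmem b₂).2
      rw [hgb] at h₁
      have hd : dist b₁ b₂ < ε := by
        have := dist_triangle b₁ (g b₂) b₂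
        rw [mem_ball] at h₁ h₂
        rw [dist_comm (g b₂) b₂] at *
        linarith [h₁, h₂, this]
      have : b₁ ∈ ball b₁ ε ∩ ball b₂ ε :=
        ⟨mem_ball_self hε, by simpa [mem_ball] using hd⟩
      exact (hdisj.le_bot this).elim
  refine ⟨⟨htfin.toFinset.card, key⟩, ?_⟩
  intro hfb
  exact ⟨htfin.toFinset.card, fun x y =>
    ⟨𝓑.B x y, key x y, 𝓑.blocks x y (hfb x y)⟩⟩
end
end

section
/- Let Λ ⊂ Isom(ℝⁿ) be a cocompact reflection (Coxeter) group acting on an apartment 𝒜 ≅ ℝⁿ with fundamental chamber W, and let x,y ∈ W. Let 𝒮(x), 𝒮(y) ⊂ 𝒜 denote the sets of points of type x and type y respectively (i.e., the Λ-orbits of x and y). Then there exist finitely many points b₁,…,b_k ∈ W such that every midpoint (x̄+ȳ)/2 with x̄ ∈ 𝒮(x), ȳ ∈ 𝒮(y) lies in 𝒮(b₁) ∪ … ∪ 𝒮(b_k). Moreover one can take k ≤ 2^n m², where m is the index of a translation subgroup ℤⁿ ≤ Λ. -/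
open Module

/-!
Moving `x'` back to `x` by `g₁⁻¹`, only the points `g y` with `g ∈ Λ` matter. Write
`g = h ∘ τ_v` with `h` a coset representative and `v ∈ T`; then `g y = h y + A v` with `A` the
linear part of `h`, and conjugating `τ_v` by `h` shows that `A v ∈ j 0 + T` for another
representative `j`. Since `T` is a discrete subgroup, it has rank at most `n`, so `T / 2T` has
at most `2^n` elements and `g y` lies in `p + 2T` for one of at most `m² 2^n` points `p`.
Finally `midpoint x (p + 2t) = midpoint x p + t` is the image of `midpoint x p` under the
translation `τ_t ∈ Λ`.
-/

theorem Submodule.finrank_int_le_of_discrete {E : Type*} [NormedAddCommGroup E] [NormedSpace ℝ E]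
    [FiniteDimensional ℝ E] (L : Submodule ℤ E) [DiscreteTopology L] :
    finrank ℤ L ≤ finrank ℝ E := by
  have hL : DiscreteTopology (span ℤ (L : Set E)) := by rwa [span_eq]
  calc finrank ℤ L = Set.finrank ℤ (L : Set E) := by rw [Set.finrank, span_eq]
    _ = Set.finrank ℝ (L : Set E) := (Real.finrank_eq_int_finrank_of_discrete hL).symm
    _ ≤ finrank ℝ E := Submodule.finrank_le _

theorem Module.Basis.exists_eq_sum_add_two_nsmul {M ι : Type*} [AddCommGroup M] [Fintype ι]
    [DecidableEq ι] (b : Basis ι ℤ M) (u : M) :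
    ∃ ε ∈ Fintype.piFinset fun _ : ι ↦ ({0, 1} : Finset ℤ), ∃ t : M,
      u = ∑ i, ε i • b i + 2 • t := by
  refine ⟨fun i ↦ b.repr u i % 2, ?_, ∑ i, (b.repr u i / 2) • b i, ?_⟩
  · simpa [Fintype.mem_piFinset] using fun i ↦ Int.emod_two_eq_zero_or_one (b.repr u i)
  · conv_lhs => rw [← b.sum_repr u]
    rw [Finset.smul_sum, ← Finset.sum_add_distrib]
    refine Finset.sum_congr rfl fun i _ ↦ ?_
    rw [two_nsmul, ← add_smul, ← add_smul]
    congr 1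
    dsimp only
    omega

theorem Submodule.exists_finset_card_le_forall_eq_add_two_nsmul {E : Type*} [NormedAddCommGroup E]
    [NormedSpace ℝ E] [FiniteDimensional ℝ E] (L : Submodule ℤ E) [DiscreteTopology L] :
    ∃ S : Finset E, S.card ≤ 2 ^ finrank ℝ E ∧ ∀ u ∈ L, ∃ s ∈ S, ∃ t ∈ L, u = s + 2 • t := by
  classical
  let b := Module.finBasis ℤ L
  let C := Fintype.piFinset fun _ : Fin (finrank ℤ L) ↦ ({0, 1} : Finset ℤ)
  refine ⟨C.image fun ε ↦ ((∑ i, ε i • b i : L) : E), ?_, fun u hu ↦ ?_⟩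
  · calc _ ≤ C.card := Finset.card_image_le
      _ = 2 ^ finrank ℤ L := by simp [C, Fintype.card_piFinset]
      _ ≤ 2 ^ finrank ℝ E := Nat.pow_le_pow_right two_pos L.finrank_int_le_of_discrete
  · obtain ⟨ε, hε, t, hut⟩ := b.exists_eq_sum_add_two_nsmul ⟨u, hu⟩
    exact ⟨_, Finset.mem_image_of_mem _ hε, t, t.2, congrArg Subtype.val hut⟩

theorem IsometryEquiv.map_add_eq {E : Type*} [NormedAddCommGroup E] [NormedSpace ℝ E]
    (h : E ≃ᵢ E) (a b : E) : h (a + b) = h a + h.toRealLinearIsometryEquiv b := by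
  have := map_add h.toRealLinearIsometryEquiv a b
  simp only [toRealLinearIsometryEquiv_apply] at this ⊢
  linear_combination (norm := abel_nf) this

theorem midpoint_add_two_nsmul {E : Type*} [AddCommGroup E] [Module ℝ E] (x p t : E) :
    midpoint ℝ x (p + 2 • t) = midpoint ℝ x p + t := by
  rw [midpoint_eq_smul_add, midpoint_eq_smul_add, two_nsmul, invOf_eq_inv]
  module

section Crystallographic

variable {E : Type*} [NormedAddCommGroup E] [NormedSpace ℝ E] {Λ : Subgroup (E ≃ᵢ E)}
  {T : AddSubgroup E} {reps : Finset (E ≃ᵢ E)}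

theorem exists_mem_reps_toRealLinearIsometryEquiv_eq
    (hTΛ : ∀ v ∈ T, ∃ g ∈ Λ, ∀ z, g z = z + v)
    (hreps : ∀ g ∈ Λ, ∃ h ∈ reps, ∃ v ∈ T, ∀ z, g z = h (z + v))
    {h : E ≃ᵢ E} (hh : h ∈ Λ) {t : E} (ht : t ∈ T) :
    ∃ j ∈ reps, ∃ u ∈ T, h.toRealLinearIsometryEquiv t = j 0 + u := by
  obtain ⟨τ, hτΛ, hτ⟩ := hTΛ t ht
  obtain ⟨j, hj, v, hv, hjv⟩ := hreps _ (mul_mem (mul_mem hh hτΛ) (inv_mem hh))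
  refine ⟨j, hj, v, hv, ?_⟩
  -- `h τ h⁻¹` is the translation by the linear part of `h` applied to `t`; evaluate it at `-v`.
  have hconj : (h * τ * h⁻¹) (-v) = -v + h.toRealLinearIsometryEquiv t := by
    change h (τ (h.symm (-v))) = _
    rw [hτ, IsometryEquiv.map_add_eq, h.apply_symm_apply]
  rw [hjv, neg_add_cancel] at hconj
  rw [hconj]
  abel

theorem exists_finset_forall_apply_eq_add_two_nsmul
    (hTΛ : ∀ v ∈ T, ∃ g ∈ Λ, ∀ z, g z = z + v)
    (hreps_mem : ∀ g ∈ reps, g ∈ Λ)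
    (hreps : ∀ g ∈ Λ, ∃ h ∈ reps, ∃ v ∈ T, ∀ z, g z = h (z + v))
    {S : Finset E} (hS : ∀ u ∈ T, ∃ s ∈ S, ∃ t ∈ T, u = s + 2 • t) (y : E) :
    ∃ P : Finset E, P.card ≤ reps.card ^ 2 * S.card ∧
      ∀ g ∈ Λ, ∃ p ∈ P, ∃ t ∈ T, g y = p + 2 • t := by
  classical
  refine ⟨(reps ×ˢ reps ×ˢ S).image fun q ↦ q.1 y + q.2.1 0 + q.2.2, ?_, fun g hg ↦ ?_⟩
  · calc _ ≤ (reps ×ˢ reps ×ˢ S).card := Finset.card_image_le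
      _ = reps.card ^ 2 * S.card := by simp only [Finset.card_product]; ring
  · obtain ⟨h, hh, v, hv, hgh⟩ := hreps g hg
    obtain ⟨j, hj, u, hu, hju⟩ :=
      exists_mem_reps_toRealLinearIsometryEquiv_eq hTΛ hreps (hreps_mem h hh) hv
    obtain ⟨s, hs, t, ht, hust⟩ := hS u hu
    refine ⟨_, Finset.mem_image.2 ⟨(h, j, s), by simp [hh, hj, hs], rfl⟩, t, ht, ?_⟩
    rw [hgh, IsometryEquiv.map_add_eq, hju, hust]
    abel

end Crystallographic

theorem coxeter_midpoints_finitely_many_types_general (n m : ℕ)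
    (Λ : Subgroup (EuclideanSpace ℝ (Fin n) ≃ᵢ EuclideanSpace ℝ (Fin n)))
    (T : AddSubgroup (EuclideanSpace ℝ (Fin n)))
    (hTdisc : DiscreteTopology T)
    -- `Λ'`, the subgroup of translations by vectors of `T`, is contained in `Λ` ...
    (hTΛ : ∀ v ∈ T, ∃ g ∈ Λ, ∀ z, g z = z + v)
    -- ... and has index `m` in `Λ`: there are `m` coset representatives
    (reps : Finset (EuclideanSpace ℝ (Fin n) ≃ᵢ EuclideanSpace ℝ (Fin n)))
    (hreps : reps.card = m ∧ (∀ g ∈ reps, g ∈ Λ) ∧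
      ∀ g ∈ Λ, ∃ h ∈ reps, ∃ v ∈ T, ∀ z, g z = h (z + v))
    (x y : EuclideanSpace ℝ (Fin n)) :
    ∃ b : Finset (EuclideanSpace ℝ (Fin n)), b.card ≤ 2 ^ n * m ^ 2 ∧
      ∀ x' y' : EuclideanSpace ℝ (Fin n),
        (∃ g ∈ Λ, g x = x') → (∃ g ∈ Λ, g y = y') →
          ∃ c ∈ b, ∃ g ∈ Λ, g c = midpoint ℝ x' y' := by
  have : DiscreteTopology T.toIntSubmodule := hTdisc
  obtain ⟨S, hS_card, hS⟩ := T.toIntSubmodule.exists_finset_card_le_forall_eq_add_two_nsmul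
  obtain ⟨P, hP_card, hP⟩ :=
    exists_finset_forall_apply_eq_add_two_nsmul hTΛ hreps.2.1 hreps.2.2 hS y
  refine ⟨P.image (midpoint ℝ x), ?_, ?_⟩
  · calc _ ≤ P.card := Finset.card_image_le
      _ ≤ m ^ 2 * 2 ^ n := by
        rw [finrank_euclideanSpace_fin] at hS_card
        rw [← hreps.1]
        exact hP_card.trans (Nat.mul_le_mul_left _ hS_card)
      _ = 2 ^ n * m ^ 2 := mul_comm _ _
  rintro x' y' ⟨g₁, hg₁, rfl⟩ ⟨g₂, hg₂, rfl⟩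
  obtain ⟨p, hp, t, ht, hpt⟩ := hP _ (mul_mem (inv_mem hg₁) hg₂)
  obtain ⟨τ, hτ, hτt⟩ := hTΛ t ht
  refine ⟨_, Finset.mem_image_of_mem _ hp, g₁ * τ, mul_mem hg₁ hτ, ?_⟩
  change g₁ (τ _) = _
  rw [hτt, ← midpoint_add_two_nsmul, ← hpt, g₁.map_midpoint]
  congr 1
  exact g₁.apply_symm_apply _

/-- Let `Λ` be a cocompact reflection group acting on an apartment
`ℝ^n`, containing as a subgroup of index `m` a group `Λ'` of translations by a lattice
`T ≅ ℤ^n`. Then, for given `x, y`, the midpoints of pairs of points from the `Λ`-orbits of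
`x` and of `y` lie in at most `2^n * m^2` further `Λ`-orbits (types). -/
theorem coxeter_midpoints_finitely_many_types (n m : ℕ) (hm : 0 < m)
    (Λ : Subgroup (EuclideanSpace ℝ (Fin n) ≃ᵢ EuclideanSpace ℝ (Fin n)))
    (hcocompact : ∃ R > (0:ℝ), ∀ z : EuclideanSpace ℝ (Fin n),
      ∃ g ∈ Λ, dist (g z) 0 ≤ R)
    (T : AddSubgroup (EuclideanSpace ℝ (Fin n)))
    (hTdisc : DiscreteTopology T)
    (hTcocpt : ∃ R > (0:ℝ), ∀ z : EuclideanSpace ℝ (Fin n), ∃ v ∈ T, dist z v ≤ R)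
    -- `Λ'`, the subgroup of translations by vectors of `T`, is contained in `Λ` ...
    (hTΛ : ∀ v ∈ T, ∃ g ∈ Λ, ∀ z, g z = z + v)
    -- ... and has index `m` in `Λ`: there are `m` coset representatives
    (reps : Finset (EuclideanSpace ℝ (Fin n) ≃ᵢ EuclideanSpace ℝ (Fin n)))
    (hreps : reps.card = m ∧ (∀ g ∈ reps, g ∈ Λ) ∧
      ∀ g ∈ Λ, ∃ h ∈ reps, ∃ v ∈ T, ∀ z, g z = h (z + v))
    (x y : EuclideanSpace ℝ (Fin n)) :
    ∃ b : Finset (EuclideanSpace ℝ (Fin n)), b.card ≤ 2 ^ n * m ^ 2 ∧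
      ∀ x' y' : EuclideanSpace ℝ (Fin n),
        (∃ g ∈ Λ, g x = x') → (∃ g ∈ Λ, g y = y') →
          ∃ c ∈ b, ∃ g ∈ Λ, g c = midpoint ℝ x' y' :=
  coxeter_midpoints_finitely_many_types_general n m Λ T hTdisc hTΛ reps hreps x y
end
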